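/- arXiv:2204.13888 — 2 statements merged into one kernel-verified Lean document; each statement's English description precedes it below -/
import Mathlib

section
/- Let (X, d) be a complete metric space and let F be a finite nonempty set of maps f : X → X for which there exists λ ∈ (0,1) with d(f(x), f(y)) ≤ λ·d(x,y) for all x, y ∈ X and f ∈ F. Then there exists a unique nonempty compact subset C ⊆ X satisfying ⋃_{f ∈ F} f(C) = C. -/
/-!
The Hutchinson operator `K ↦ ⋃_{f ∈ F} f(K)` maps nonempty compact sets to nonempty compact
sets, and it is a `λ`-contraction for the Hausdorff distance because each `f` is. The nonempty
compact subsets of a complete space form a complete space under the Hausdorff distance, so the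
Banach fixed point theorem gives a unique fixed point, which is the attractor.
-/

open Metric Set TopologicalSpace
open scoped NNReal

section Lipschitz

variable {α β : Type*} [PseudoEMetricSpace α] [PseudoEMetricSpace β] {K : ℝ≥0}
  {f : α → β}

theorem LipschitzWith.infEDist_image_le (hf : LipschitzWith K f) (x : α) {t : Set α}
    (ht : t.Nonempty) : infEDist (f x) (f '' t) ≤ K * infEDist x t := by
  have : Nonempty t := ht.to_subtype
  calc infEDist (f x) (f '' t)
      ≤ ⨅ y : t, K * edist x y :=
        le_iInf fun y => (infEDist_le_edist_of_mem (mem_image_of_mem f y.2)).trans (hf x y)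
    _ = K * infEDist x t := by rw [← ENNReal.mul_iInf (by simp), infEDist, iInf_subtype']

theorem LipschitzWith.hausdorffEDist_image_le (hf : LipschitzWith K f) {s t : Set α}
    (hs : s.Nonempty) (ht : t.Nonempty) :
    hausdorffEDist (f '' s) (f '' t) ≤ K * hausdorffEDist s t := by
  refine hausdorffEDist_le_of_infEDist ?_ ?_ <;> rintro _ ⟨x, hx, rfl⟩
  · grw [hf.infEDist_image_le x ht, infEDist_le_hausdorffEDist_of_mem hx]
  · grw [hf.infEDist_image_le x hs, infEDist_le_hausdorffEDist_of_mem hx, hausdorffEDist_comm]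

end Lipschitz

namespace TopologicalSpace.NonemptyCompacts

variable {α : Type*}

def hutchinson [TopologicalSpace α] (F : Finset (α → α)) (hF : F.Nonempty)
    (hcont : ∀ f ∈ F, Continuous f) (K : NonemptyCompacts α) : NonemptyCompacts α where
  carrier := ⋃ f ∈ F, f '' K
  isCompact' := F.finite_toSet.isCompact_biUnion fun f hf => K.isCompact.image (hcont f hf)
  nonempty' := by
    obtain ⟨f, hf⟩ := hF
    exact (K.nonempty.image f).mono (subset_biUnion_of_mem (u := fun f => f '' K) hf)

theorem lipschitzWith_hutchinson [EMetricSpace α] {F : Finset (α → α)} (hF : F.Nonempty)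
    {K : ℝ≥0} (hlip : ∀ f ∈ F, LipschitzWith K f) :
    LipschitzWith K (hutchinson F hF fun f hf => (hlip f hf).continuous) := by
  intro A B
  calc hausdorffEDist (⋃ f ∈ F, f '' A) (⋃ f ∈ F, f '' B)
      ≤ ⨆ f ∈ F, hausdorffEDist (f '' A) (f '' B) :=
        hausdorffEDist_iUnion_le.trans (iSup_mono fun _ => hausdorffEDist_iUnion_le)
    _ ≤ K * hausdorffEDist (A : Set α) B :=
        iSup₂_le fun f hf => (hlip f hf).hausdorffEDist_image_le A.nonempty B.nonempty

end TopologicalSpace.NonemptyCompacts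

theorem ifs_attractor_exists_unique_general {X : Type*} [MetricSpace X] [CompleteSpace X]
    [Nonempty X] (F : Finset (X → X)) (hF : F.Nonempty) (l : ℝ)
    (hl1 : l < 1) (hcontr : ∀ f ∈ F, ∀ x y : X, dist (f x) (f y) ≤ l * dist x y) :
    ∃! C : Set X, C.Nonempty ∧ IsCompact C ∧ (⋃ f ∈ F, f '' C) = C := by
  have hlip : ∀ f ∈ F, LipschitzWith l.toNNReal f := fun f hf =>
    LipschitzWith.of_dist_le' (hcontr f hf)
  set T := NonemptyCompacts.hutchinson F hF fun f hf => (hlip f hf).continuous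
  have hT : ContractingWith l.toNNReal T :=
    ⟨Real.toNNReal_lt_one.2 hl1, NonemptyCompacts.lipschitzWith_hutchinson hF hlip⟩
  set A : NonemptyCompacts X := hT.fixedPoint T
  refine ⟨A, ⟨A.nonempty, A.isCompact, congrArg SetLike.coe hT.fixedPoint_isFixedPt⟩, ?_⟩
  rintro C ⟨hne, hcpt, hfix⟩
  exact congrArg SetLike.coe <|
    hT.fixedPoint_unique (x := ⟨⟨C, hcpt⟩, hne⟩) (NonemptyCompacts.ext hfix)

/-- Existence and uniqueness of the attractor of an iterated function system:
given a complete metric space `X` and a finite nonempty family `F` of maps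
`f : X → X` admitting a common contraction factor `λ ∈ (0,1)`, there is a unique
nonempty compact set `C ⊆ X` with `⋃_{f ∈ F} f(C) = C`. -/
theorem ifs_attractor_exists_unique {X : Type*} [MetricSpace X] [CompleteSpace X]
    [Nonempty X] (F : Finset (X → X)) (hF : F.Nonempty) (l : ℝ) (hl0 : 0 < l)
    (hl1 : l < 1) (hcontr : ∀ f ∈ F, ∀ x y : X, dist (f x) (f y) ≤ l * dist x y) :
    ∃! C : Set X, C.Nonempty ∧ IsCompact C ∧ (⋃ f ∈ F, f '' C) = C :=
  ifs_attractor_exists_unique_general F hF l hl1 hcontr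
end

section
/- Let (X̃, φ̃) and (X, φ) be dynamical systems given by homeomorphisms of compact metric spaces, and let π : X̃ → X be a continuous surjection satisfying π ∘ φ̃ = φ ∘ π. Assume (X̃, φ̃) is minimal (every orbit is dense) and that there exists a point x₀ ∈ X whose fibre π^{-1}(x₀) is a single point. Let g : X̃ → ℤ be a continuous function such that g − g∘φ̃^{-1} is constant on every fibre of π. Then g itself is constant on every fibre of π, i.e., there exists a continuous g₀ : X → ℤ with g = g₀ ∘ π. -/
/-!
Differences of `g` along a fibre are invariant under `φ̃`, since `g − g ∘ φ̃⁻¹` takes the same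
value at both points. Near the singleton fibre `{w₀}` every fibre lies in the open set where
`g = g w₀`, because `π` is a closed map. By minimality the orbit of any `w` enters that region,
dragging the whole fibre of `w` along, so the difference vanishes there and hence everywhere.
-/

open Function Filter Topology

namespace Function.Semiconj

variable {α β : Type*} {π : α → β} {f : Equiv.Perm α} {e : Equiv.Perm β}

theorem perm_zpow (h : Semiconj π f e) (n : ℤ) : Semiconj π ⇑(f ^ n) ⇑(e ^ n) := by
  induction n using Int.induction_on with
  | zero => exact Semiconj.id_right
  | succ k ih =>
    rw [zpow_add_one, zpow_add_one, Equiv.Perm.coe_mul, Equiv.Perm.coe_mul]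
    exact ih.comp_right h
  | pred k ih =>
    rw [zpow_sub_one, zpow_sub_one, Equiv.Perm.coe_mul, Equiv.Perm.coe_mul]
    exact ih.comp_right (h.inverses_right f.apply_symm_apply e.symm_apply_apply)

variable {G : Type*} [AddCommGroup G] {g : α → G}

theorem sub_perm_zpow_eq (h : Semiconj π f e)
    (hcob : ∀ w w', π w = π w' → g w - g (f.symm w) = g w' - g (f.symm w'))
    {w w' : α} (hww' : π w = π w') (n : ℤ) :
    g ((f ^ n) w) - g ((f ^ n) w') = g w - g w' := by
  have hperiodic : Periodic (fun n : ℤ ↦ g ((f ^ n) w) - g ((f ^ n) w')) 1 := by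
    intro n
    have hstep : ∀ v, (f ^ (n + 1)) v = f ((f ^ n) v) := fun v ↦ by
      rw [add_comm, zpow_one_add, Equiv.Perm.mul_apply]
    have hfib : π ((f ^ (n + 1)) w) = π ((f ^ (n + 1)) w') := by
      rw [(h.perm_zpow _).eq, (h.perm_zpow _).eq, hww']
    have := hcob _ _ hfib
    simp only [hstep, Equiv.symm_apply_apply] at this ⊢
    exact sub_eq_sub_iff_sub_eq_sub.mpr this
  simpa using hperiodic.int_mul_eq n

theorem factorsThrough_of_dense_orbit (h : Semiconj π f e)
    (hcob : ∀ w w', π w = π w' → g w - g (f.symm w) = g w' - g (f.symm w'))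
    [TopologicalSpace α] (hmin : ∀ w : α, Dense {v : α | ∃ n : ℤ, (f ^ n) w = v})
    {V : Set β} (hV : IsOpen (π ⁻¹' V)) (hVne : (π ⁻¹' V).Nonempty)
    (hgV : ∀ v v', π v ∈ V → π v = π v' → g v = g v') :
    FactorsThrough g π := by
  intro w w' hww'
  obtain ⟨_, ⟨n, rfl⟩, hn⟩ := (hmin w).exists_mem_open hV hVne
  have hfib : π ((f ^ n) w) = π ((f ^ n) w') := by
    rw [(h.perm_zpow n).eq, (h.perm_zpow n).eq, hww']
  rw [← sub_eq_zero, ← h.sub_perm_zpow_eq hcob hww' n, hgV _ _ hn hfib, sub_self]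

end Function.Semiconj

theorem IsClosedMap.eventually_apply_eq_of_preimage_eq_singleton {α β G : Type*}
    [TopologicalSpace α] [TopologicalSpace β] [TopologicalSpace G] [DiscreteTopology G]
    {π : α → β} (hπ : IsClosedMap π) {g : α → G} (hg : Continuous g) {x₀ : β} {w₀ : α}
    (hfib : π ⁻¹' {x₀} = {w₀}) :
    ∀ᶠ x in 𝓝 x₀, ∀ w ∈ π ⁻¹' {x}, g w = g w₀ :=
  hπ.eventually_nhds_fiber x₀ fun w hw ↦ by
    rw [hfib] at hw
    subst hw
    exact ((IsLocallyConstant.iff_continuous g).2 hg).eventually_eq w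

theorem cocycle_constant_on_fibres_general
    {Xt X : Type*} [MetricSpace Xt] [CompactSpace Xt] [MetricSpace X]
    (φt : Xt ≃ₜ Xt) (φ : X ≃ₜ X) (π : Xt → X)
    (hcont : Continuous π) (hsurj : Function.Surjective π)
    (hsemi : ∀ w : Xt, π (φt w) = φ (π w))
    (hmin : ∀ w : Xt, Dense {v : Xt | ∃ n : ℤ, (φt.toEquiv ^ n) w = v})
    (hsing : ∃ x₀ : X, ∃ w₀ : Xt, π ⁻¹' {x₀} = {w₀})
    (g : Xt → ℤ) (hg : Continuous g)
    (hcob : ∀ w w' : Xt, π w = π w' →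
      g w - g (φt.symm w) = g w' - g (φt.symm w')) :
    ∃ g₀ : X → ℤ, Continuous g₀ ∧ g = g₀ ∘ π := by
  obtain ⟨x₀, w₀, hfib⟩ := hsing
  have hclosed : IsClosedMap π := hcont.isClosedMap
  obtain ⟨V, hgV, hV, hx₀V⟩ :=
    eventually_nhds_iff.1 (hclosed.eventually_apply_eq_of_preimage_eq_singleton hg hfib)
  have hw₀V : w₀ ∈ π ⁻¹' V := by
    have : w₀ ∈ π ⁻¹' {x₀} := hfib ▸ rfl
    rwa [Set.mem_preimage, this]
  have hfactor : FactorsThrough g π :=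
    (show Semiconj π φt.toEquiv φ.toEquiv from hsemi).factorsThrough_of_dense_orbit hcob hmin
      (hV.preimage hcont) ⟨w₀, hw₀V⟩ fun v v' hv hvv' ↦
        (hgV _ hv v rfl).trans (hgV _ hv v' hvv'.symm).symm
  let p : C(Xt, X) := ⟨π, hcont⟩
  have hquot : IsQuotientMap p := hclosed.isQuotientMap hcont hsurj
  exact ⟨hquot.lift ⟨g, hg⟩ hfactor, map_continuous _,
    funext fun w ↦ (DFunLike.congr_fun (hquot.lift_comp ⟨g, hg⟩ hfactor) w).symm⟩

/-- Let `π : X̃ → X` be a continuous surjective semiconjugacy between homeomorphisms of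
compact metric spaces, with `(X̃, φ̃)` minimal and some fibre of `π` a singleton.  If
`g : X̃ → ℤ` is continuous and `g − g ∘ φ̃⁻¹` is constant on every fibre of `π`, then
`g` itself is constant on every fibre, i.e. `g = g₀ ∘ π` for some continuous
`g₀ : X → ℤ`. -/
theorem cocycle_constant_on_fibres
    {Xt X : Type*} [MetricSpace Xt] [CompactSpace Xt] [MetricSpace X] [CompactSpace X]
    (φt : Xt ≃ₜ Xt) (φ : X ≃ₜ X) (π : Xt → X)
    (hcont : Continuous π) (hsurj : Function.Surjective π)
    (hsemi : ∀ w : Xt, π (φt w) = φ (π w))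
    (hmin : ∀ w : Xt, Dense {v : Xt | ∃ n : ℤ, (φt.toEquiv ^ n) w = v})
    (hsing : ∃ x₀ : X, ∃ w₀ : Xt, π ⁻¹' {x₀} = {w₀})
    (g : Xt → ℤ) (hg : Continuous g)
    (hcob : ∀ w w' : Xt, π w = π w' →
      g w - g (φt.symm w) = g w' - g (φt.symm w')) :
    ∃ g₀ : X → ℤ, Continuous g₀ ∧ g = g₀ ∘ π :=
  cocycle_constant_on_fibres_general φt φ π hcont hsurj hsemi hmin hsing g hg hcob
end
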